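/- Koopman–von Neumann lift (single mode): let p ∈ ℂ[X] be a polynomial and let z : ℝ → ℂ be differentiable with z'(t) = p(z(t)) for all t. Then for every n ∈ ℕ and every t ∈ ℝ, the function t ↦ c(z(t))_n is differentiable at t with derivative equal to ((a† ∘ p(a)) c(z(t)))_n; that is, the coherent sequence evolves componentwise under the linear generator A = a† p(a). -/

import Mathlib

/-- The coherent sequence `c(z)ₙ = zⁿ/√(n!)`. -/
noncomputable def coherent (z : ℂ) : ℕ → ℂ :=
  fun n => z ^ n / (Real.sqrt (Nat.factorial n) : ℂ)

/-- The annihilation operator `(a x)ₙ = √(n+1)·x_{n+1}`. -/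
noncomputable def ann : Module.End ℂ (ℕ → ℂ) :=
  { toFun := fun x n => (Real.sqrt (n + 1) : ℂ) * x (n + 1)
    map_add' := by intro x y; funext n; simp [mul_add]
    map_smul' := by intro c x; funext n; simp [smul_eq_mul]; ring }

/-- The creation operator `(a† x)₀ = 0`, `(a† x)ₙ = √n·x_{n−1}` for `n ≥ 1`. -/
noncomputable def cre : Module.End ℂ (ℕ → ℂ) :=
  { toFun := fun x n => match n with
      | 0 => 0
      | Nat.succ m => (Real.sqrt (m + 1) : ℂ) * x m
    map_add' := by intro x y; funext n; cases n <;> simp [mul_add]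
    map_smul' := by intro c x; funext n; cases n <;> (simp [smul_eq_mul]; try ring) }

/-! The coherent sequence `c(z)` is an eigenvector of `a` with eigenvalue `z`, so
`p(a) c(z) = p(z) c(z)`, while `a†` acts on `c(z)` as `d/dz`: `(a† c(z))ₙ = n zⁿ⁻¹/√(n!)`.
The chain rule applied to `zⁿ/√(n!)` along `z' = p(z)` therefore gives
`p(z) (a† c(z))ₙ = (a† p(a) c(z))ₙ`. -/

lemma ofReal_sqrt_factorial_succ (n : ℕ) :
    (Real.sqrt (Nat.factorial (n + 1)) : ℂ) = Real.sqrt (n + 1) * Real.sqrt (Nat.factorial n) := by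
  push_cast [Nat.factorial_succ, ← Real.sqrt_mul (by positivity : (0 : ℝ) ≤ n + 1)]
  norm_num

lemma ofReal_sqrt_factorial_ne_zero (n : ℕ) : (Real.sqrt (Nat.factorial n) : ℂ) ≠ 0 := by
  exact_mod_cast Real.sqrt_ne_zero'.2 (by positivity)

lemma coherent_ne_zero (z : ℂ) : coherent z ≠ 0 := fun h => by
  simpa [coherent] using congrFun h 0

lemma ann_coherent (z : ℂ) : ann (coherent z) = z • coherent z := by
  funext n
  have hsqrt : (Real.sqrt (n + 1) : ℂ) ≠ 0 := by
    exact_mod_cast Real.sqrt_ne_zero'.2 (by positivity)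
  have := ofReal_sqrt_factorial_ne_zero n
  simp only [ann, coherent, LinearMap.coe_mk, AddHom.coe_mk, Pi.smul_apply, smul_eq_mul,
    ofReal_sqrt_factorial_succ]
  field_simp
  ring

lemma hasEigenvector_ann_coherent (z : ℂ) : ann.HasEigenvector z (coherent z) :=
  ⟨Module.End.mem_eigenspace_iff.2 (ann_coherent z), coherent_ne_zero z⟩

lemma aeval_ann_coherent (p : Polynomial ℂ) (z : ℂ) :
    Polynomial.aeval ann p (coherent z) = p.eval z • coherent z :=
  Module.End.aeval_apply_of_hasEigenvector (hasEigenvector_ann_coherent z)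

lemma cre_coherent_apply (z : ℂ) (n : ℕ) :
    cre (coherent z) n = n * z ^ (n - 1) / Real.sqrt (Nat.factorial n) := by
  cases n with
  | zero => simp [cre]
  | succ m =>
    have := ofReal_sqrt_factorial_ne_zero m
    have hsq : (Real.sqrt (m + 1) : ℂ) * Real.sqrt (m + 1) = m + 1 := by
      rw [← Complex.ofReal_mul, Real.mul_self_sqrt (by positivity)]
      push_cast
      ring
    simp only [cre, coherent, LinearMap.coe_mk, AddHom.coe_mk, Nat.add_sub_cancel,
      ofReal_sqrt_factorial_succ]
    push_cast
    field_simp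
    rw [← hsq]
    ring

lemma hasDerivAt_coherent_apply (z : ℂ) (n : ℕ) :
    HasDerivAt (fun w => coherent w n) (cre (coherent z) n) z := by
  rw [cre_coherent_apply]
  exact (hasDerivAt_pow n z).div_const _

/-- Koopman–von Neumann lift, single mode: if `z' (t) = p(z(t))`, then the
coherent sequence evolves componentwise under the linear generator
`A = a† p(a)`. -/
theorem kvn_lift_single_mode (p : Polynomial ℂ) (z : ℝ → ℂ)
    (hz : ∀ t : ℝ, HasDerivAt z (Polynomial.eval (z t) p) t) :
    ∀ (n : ℕ) (t : ℝ),
      HasDerivAt (fun s : ℝ => coherent (z s) n)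
        (((cre * Polynomial.aeval ann p) (coherent (z t))) n) t := by
  intro n t
  have hchain := (hasDerivAt_coherent_apply (z t) n).comp t (hz t)
  rw [Module.End.mul_apply, aeval_ann_coherent, map_smul, Pi.smul_apply, smul_eq_mul, mul_comm]
  exact hchain
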